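/- For the n-th order integrator chain ẋ = Ax + Bu (with u ∈ ℝ³) with controllability Gramian W_τ = ∫₀^τ e^{At}BBᵀe^{Aᵀt} dt and G(τ) = ∫₀^τ e^{As}B ds, the control u*(t) = Bᵀ e^{Aᵀ(τ−t)} W_τ^{−1} G(τ) u₀ equals u₀ identically in t for every u₀ ∈ ℝ³; equivalently, Bᵀ e^{Aᵀ(τ−t)} W_τ^{−1} G(τ) = I₃ for all t ∈ [0,τ]. -/

import Mathlib

open Matrix

/-- Block-nilpotent shift matrix of the n-th order integrator chain in `ℝ^{3n}`. -/
noncomputable def chainA (n : ℕ) : Matrix (Fin n × Fin 3) (Fin n × Fin 3) ℝ :=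
  fun p q => if p.1.val + 1 = q.1.val ∧ p.2 = q.2 then 1 else 0

/-- Input matrix of the chain: bottom block `I₃`, zero elsewhere. -/
noncomputable def chainB (n : ℕ) : Matrix (Fin n × Fin 3) (Fin 3) ℝ :=
  fun p b => if p.1.val = n - 1 ∧ p.2 = b then 1 else 0

lemma chainA_pow (n k : ℕ) : (chainA n) ^ k =
    (fun p q => if p.1.val + k = q.1.val ∧ p.2 = q.2 then 1 else 0 :
      Matrix (Fin n × Fin 3) (Fin n × Fin 3) ℝ) := by
  induction k with
  | zero =>
      ext p q
      by_cases h : p = q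
      · subst h; simp [Matrix.one_apply]
      · rw [pow_zero, Matrix.one_apply_ne h]
        have h' : ¬ (p.1.val + 0 = q.1.val ∧ p.2 = q.2) := by
          rintro ⟨h1, h2⟩
          exact h (Prod.ext (Fin.ext (by omega)) h2)
        simp only [if_neg h']
  | succ k ih =>
      ext p q
      rw [pow_succ, Matrix.mul_apply, ih]
      simp only [chainA]
      by_cases h : p.1.val + (k + 1) = q.1.val ∧ p.2 = q.2
      · obtain ⟨h1, h2⟩ := h
        have hr : p.1.val + k < n := by omega
        rw [Finset.sum_eq_single (⟨⟨p.1.val + k, hr⟩, p.2⟩ : Fin n × Fin 3)]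
        · have c1 : p.1.val + k = ((⟨p.1.val + k, hr⟩ : Fin n)).val := rfl
          simp [h1, h2]
          omega
        · intro r _ hne
          by_cases hA : p.1.val + k = r.1.val ∧ p.2 = r.2
          · exact absurd (show r = (⟨⟨p.1.val + k, hr⟩, p.2⟩ : Fin n × Fin 3) from Prod.ext (Fin.ext hA.1.symm) hA.2.symm) hne
          · simp [hA]
        · simp
      · rw [if_neg h]
        apply Finset.sum_eq_zero
        intro r _
        by_cases hA : p.1.val + k = r.1.val ∧ p.2 = r.2
        · have hB : ¬ (r.1.val + 1 = q.1.val ∧ r.2 = q.2) := by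
            rintro ⟨j1, j2⟩
            exact h ⟨by omega, hA.2.trans j2⟩
          simp [hB]
        · simp [hA]

lemma exp_smul_chainA (n : ℕ) (s : ℝ) :
    NormedSpace.exp (s • chainA n) = (fun p q =>
      if p.1.val ≤ q.1.val ∧ p.2 = q.2
      then s ^ (q.1.val - p.1.val) / (Nat.factorial (q.1.val - p.1.val) : ℝ) else 0 :
        Matrix (Fin n × Fin 3) (Fin n × Fin 3) ℝ) := by
  simp only [NormedSpace.exp_eq_tsum (𝕂 := ℝ)]
  have hz : ∀ j ∉ Finset.range n, ((Nat.factorial j : ℝ)⁻¹) • (s • chainA n) ^ j = 0 := by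
    intro j hj
    have hA : (chainA n) ^ j = 0 := by
      rw [chainA_pow]
      ext p q
      have hq := q.1.isLt
      simp only [Finset.mem_range, not_lt] at hj
      have : ¬ (p.1.val + j = q.1.val ∧ p.2 = q.2) := by
        rintro ⟨h1, -⟩; omega
      simp [this]
    rw [smul_pow, hA, smul_zero, smul_zero]
  rw [tsum_eq_sum hz]
  ext p q
  rw [Matrix.sum_apply]
  have hterm : ∀ j, (((Nat.factorial j : ℝ)⁻¹) • (s • chainA n) ^ j) p q
      = (Nat.factorial j : ℝ)⁻¹ * s ^ j *
        (if p.1.val + j = q.1.val ∧ p.2 = q.2 then 1 else 0) := by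
    intro j
    rw [smul_pow, Matrix.smul_apply, Matrix.smul_apply, chainA_pow]
    simp [smul_eq_mul, mul_assoc]
  simp_rw [hterm]
  by_cases h : p.1.val ≤ q.1.val ∧ p.2 = q.2
  · rw [if_pos h]
    rw [Finset.sum_eq_single (q.1.val - p.1.val)]
    · rw [if_pos ⟨by omega, h.2⟩, mul_one, div_eq_inv_mul]
    · intro j _ hj
      rw [if_neg (by rintro ⟨h1, -⟩; omega), mul_zero]
    · intro hmem
      exfalso
      exact hmem (Finset.mem_range.mpr (by have := q.1.isLt; omega))
  · rw [if_neg h]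
    apply Finset.sum_eq_zero
    intro j _
    rw [if_neg (by rintro ⟨h1, h2⟩; exact h ⟨by omega, h2⟩), mul_zero]

lemma expB_apply (n : ℕ) (hn : 1 ≤ n) (s : ℝ) (p : Fin n × Fin 3) (b : Fin 3) :
    (NormedSpace.exp (s • chainA n) * chainB n) p b =
      if p.2 = b then s ^ (n - 1 - p.1.val) / (Nat.factorial (n - 1 - p.1.val) : ℝ) else 0 := by
  rw [Matrix.mul_apply, exp_smul_chainA]
  rw [Finset.sum_eq_single (⟨⟨n - 1, by omega⟩, b⟩ : Fin n × Fin 3)]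
  · have hp : p.1.val ≤ n - 1 := by have := p.1.isLt; omega
    by_cases hb : p.2 = b
    · simp [chainB, hp, hb]
    · simp [chainB, hb]
  · intro r _ hne
    have : ¬ (r.1.val = n - 1 ∧ r.2 = b) := by
      rintro ⟨h1, h2⟩
      exact hne (Prod.ext (Fin.ext h1) h2)
    simp [chainB, this]
  · simp

lemma pow_int_aux (τ : ℝ) (m : ℕ) :
    (∫ t in (0:ℝ)..τ, t ^ m) = τ ^ (m + 1) / (m + 1 : ℝ) := by
  rw [integral_pow]
  rw [zero_pow (Nat.succ_ne_zero m), sub_zero]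
  all_goals norm_num

/-- `G(τ) = ∫₀^τ e^{As}B ds`, entrywise. -/
noncomputable def chainG (n : ℕ) (τ : ℝ) : Matrix (Fin n × Fin 3) (Fin 3) ℝ :=
  fun p b => ∫ s in (0 : ℝ)..τ, (NormedSpace.exp (s • chainA n) * chainB n) p b

lemma chainG_apply (n : ℕ) (hn : 1 ≤ n) (τ : ℝ) (p : Fin n × Fin 3) (b : Fin 3) :
    chainG n τ p b =
      if p.2 = b then τ ^ (n - p.1.val) / (Nat.factorial (n - p.1.val) : ℝ) else 0 := by
  unfold chainG
  simp_rw [expB_apply n hn]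
  by_cases h : p.2 = b
  · simp only [if_pos h]
    set m := n - 1 - p.1.val with hm
    have hm1 : n - p.1.val = m + 1 := by have := p.1.isLt; omega
    rw [hm1, intervalIntegral.integral_div, pow_int_aux, Nat.factorial_succ]
    have hf : (Nat.factorial m : ℝ) ≠ 0 := Nat.cast_ne_zero.mpr m.factorial_ne_zero
    have hm2 : ((m : ℝ) + 1) ≠ 0 := by positivity
    push_cast
    field_simp
    all_goals ring
  · simp [h]


/-- Controllability Gramian `W_τ = ∫₀^τ e^{At}BBᵀe^{Aᵀt} dt`, entrywise. -/
noncomputable def gramian (n : ℕ) (τ : ℝ) :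
    Matrix (Fin n × Fin 3) (Fin n × Fin 3) ℝ :=
  fun p q => ∫ t in (0 : ℝ)..τ,
    (NormedSpace.exp (t • chainA n) * chainB n * (chainB n)ᵀ
      * (NormedSpace.exp (t • chainA n))ᵀ) p q

lemma integrand_apply (n : ℕ) (hn : 1 ≤ n) (t : ℝ) (p q : Fin n × Fin 3) :
    (NormedSpace.exp (t • chainA n) * chainB n * (chainB n)ᵀ
      * (NormedSpace.exp (t • chainA n))ᵀ) p q =
    if p.2 = q.2 then (t ^ (n - 1 - p.1.val) / (Nat.factorial (n - 1 - p.1.val) : ℝ))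
        * (t ^ (n - 1 - q.1.val) / (Nat.factorial (n - 1 - q.1.val) : ℝ)) else 0 := by
  have hE : NormedSpace.exp (t • chainA n) * chainB n * (chainB n)ᵀ
      * (NormedSpace.exp (t • chainA n))ᵀ
      = (NormedSpace.exp (t • chainA n) * chainB n)
        * (NormedSpace.exp (t • chainA n) * chainB n)ᵀ := by
    rw [Matrix.transpose_mul, ← Matrix.mul_assoc]
  rw [hE, Matrix.mul_apply]
  simp_rw [Matrix.transpose_apply, expB_apply n hn]
  by_cases h : p.2 = q.2
  · rw [if_pos h, Finset.sum_eq_single p.2]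
    · rw [if_pos rfl, if_pos h.symm]
    · intro c _ hc
      rcases eq_or_ne p.2 c with h1 | h1
      · exact absurd h1.symm hc
      · rw [if_neg h1, zero_mul]
    · simp
  · rw [if_neg h]
    apply Finset.sum_eq_zero
    intro c _
    rcases eq_or_ne p.2 c with h1 | h1
    · rcases eq_or_ne q.2 c with h2 | h2
      · exact absurd (h1.trans h2.symm) h
      · rw [if_neg h2, mul_zero]
    · rw [if_neg h1, zero_mul]


lemma gramian_apply (n : ℕ) (hn : 1 ≤ n) (τ : ℝ) (p q : Fin n × Fin 3) :
    gramian n τ p q =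
      if p.2 = q.2 then
        τ ^ ((n - 1 - p.1.val) + (n - 1 - q.1.val) + 1)
          / (((n - 1 - p.1.val) + (n - 1 - q.1.val) + 1 : ℕ) *
              (Nat.factorial (n - 1 - p.1.val) * Nat.factorial (n - 1 - q.1.val)) : ℝ)
      else 0 := by
  unfold gramian
  simp_rw [integrand_apply n hn]
  by_cases h : p.2 = q.2
  · simp only [if_pos h]
    set a := n - 1 - p.1.val
    set c := n - 1 - q.1.val
    have : ∀ t : ℝ, t ^ a / (Nat.factorial a : ℝ) * (t ^ c / (Nat.factorial c : ℝ))
        = t ^ (a + c) / ((Nat.factorial a : ℝ) * (Nat.factorial c : ℝ)) := by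
      intro t; rw [div_mul_div_comm, pow_add]
    simp_rw [this]
    rw [intervalIntegral.integral_div, pow_int_aux]
    push_cast
    rw [div_div]
  · simp [h]

lemma gramian_mul_B (n : ℕ) (hn : 1 ≤ n) (τ : ℝ) :
    gramian n τ * chainB n = chainG n τ := by
  ext p b
  rw [Matrix.mul_apply, Finset.sum_eq_single (⟨⟨n - 1, by omega⟩, b⟩ : Fin n × Fin 3)]
  · rw [gramian_apply n hn, chainG_apply n hn]
    have h0 : n - 1 - ((⟨n - 1, by omega⟩ : Fin n) : ℕ) = 0 := by simp
    simp only [h0, chainB]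
    rw [if_pos (⟨trivial, trivial⟩ : True ∧ True), mul_one]
    by_cases hb : p.2 = b
    · rw [if_pos hb, if_pos hb]
      have hm1 : n - 1 - p.1.val + 0 + 1 = n - p.1.val := by have := p.1.isLt; omega
      rw [hm1]
      congr 1
      have : n - p.1.val = (n - 1 - p.1.val) + 1 := by have := p.1.isLt; omega
      rw [this, Nat.factorial_succ]
      push_cast [Nat.factorial]
      ring
    · rw [if_neg hb, if_neg hb]
  · intro r _ hne
    have : ¬ (r.1.val = n - 1 ∧ r.2 = b) := by
      rintro ⟨h1, h2⟩
      exact hne (Prod.ext (Fin.ext h1) h2)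
    simp [chainB, this]
  · simp

lemma BT_exp_B (n : ℕ) (hn : 1 ≤ n) (s : ℝ) :
    (chainB n)ᵀ * (NormedSpace.exp (s • chainA n))ᵀ * chainB n = 1 := by
  have h1 : (chainB n)ᵀ * (NormedSpace.exp (s • chainA n))ᵀ
      = (NormedSpace.exp (s • chainA n) * chainB n)ᵀ := (Matrix.transpose_mul _ _).symm
  rw [h1]
  ext a b
  rw [Matrix.mul_apply]
  rw [Finset.sum_eq_single (⟨⟨n - 1, by omega⟩, b⟩ : Fin n × Fin 3)]
  · rw [Matrix.transpose_apply, expB_apply n hn]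
    have h0 : n - 1 - ((⟨n - 1, by omega⟩ : Fin n) : ℕ) = 0 := by simp
    simp only [h0, chainB, pow_zero, Nat.factorial_zero]
    rw [if_pos (⟨trivial, trivial⟩ : True ∧ True), mul_one, Matrix.one_apply]
    by_cases hab : a = b
    · rw [if_pos hab.symm, if_pos hab]; norm_num
    · rw [if_neg (Ne.symm hab), if_neg hab]
  · intro r _ hne
    have : ¬ (r.1.val = n - 1 ∧ r.2 = b) := by
      rintro ⟨h1, h2⟩
      exact hne (Prod.ext (Fin.ext h1) h2)
    simp [chainB, this]
  · simp

open MeasureTheory in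
set_option maxHeartbeats 1000000 in
lemma gramian_mulVec_eq_zero (n : ℕ) (hn : 1 ≤ n) (τ : ℝ) (hτ : 0 < τ)
    (x : Fin n × Fin 3 → ℝ) (hx : gramian n τ *ᵥ x = 0) : x = 0 := by
  classical
  set g : ℝ → Fin n → ℝ :=
    fun t i => t ^ (n - 1 - i.val) / (Nat.factorial (n - 1 - i.val) : ℝ) with hg
  set P : Fin 3 → Polynomial ℝ := fun b =>
    ∑ i : Fin n, Polynomial.C (x (i, b) / (Nat.factorial (n - 1 - i.val) : ℝ))
      * Polynomial.X ^ (n - 1 - i.val) with hP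
  have heval : ∀ (b : Fin 3) (t : ℝ),
      (P b).eval t = ∑ i : Fin n, x (i, b) * g t i := by
    intro b t
    rw [hP]
    simp only [Polynomial.eval_finset_sum, Polynomial.eval_mul, Polynomial.eval_C,
      Polynomial.eval_pow, Polynomial.eval_X, hg]
    exact Finset.sum_congr rfl fun i _ => by ring
  set h : ℝ → ℝ := fun t => ∑ b : Fin 3, ((P b).eval t) ^ 2 with hh
  have hgc : ∀ i : Fin n, Continuous fun t : ℝ => g t i := by
    intro i; rw [hg]; exact (continuous_pow _).div_const _
  -- closed form of gramian entries as integrals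
  set F : Fin n × Fin 3 → Fin n × Fin 3 → ℝ → ℝ := fun p q t =>
    x p * ((if p.2 = q.2 then g t p.1 * g t q.1 else 0) * x q) with hF
  have hFc : ∀ p q, Continuous (F p q) := by
    intro p q
    rw [hF]
    by_cases hpq : p.2 = q.2
    · simp only [if_pos hpq]
      exact (continuous_const.mul (((hgc p.1).mul (hgc q.1)).mul continuous_const))
    · simp only [if_neg hpq]
      simp only [zero_mul, mul_zero]
      exact continuous_const
  have hFi : ∀ p q, IntervalIntegrable (F p q) volume 0 τ :=
    fun p q => (hFc p q).intervalIntegrable 0 τ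
  have hWe : ∀ p q, gramian n τ p q
      = ∫ t in (0:ℝ)..τ, (if p.2 = q.2 then g t p.1 * g t q.1 else 0) := by
    intro p q
    unfold gramian
    exact intervalIntegral.integral_congr fun t _ => by
      rw [integrand_apply n hn t p q]
  have hquad : x ⬝ᵥ (gramian n τ *ᵥ x) = ∫ t in (0:ℝ)..τ, h t := by
    rw [dotProduct]
    simp_rw [Matrix.mulVec, dotProduct, hWe,
      ← intervalIntegral.integral_mul_const, Finset.mul_sum,
      ← intervalIntegral.integral_const_mul]
    have h1 : ∀ p : Fin n × Fin 3,
        (∑ q : Fin n × Fin 3, ∫ t in (0:ℝ)..τ, F p q t)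
          = ∫ t in (0:ℝ)..τ, ∑ q : Fin n × Fin 3, F p q t :=
      fun p => (intervalIntegral.integral_finset_sum fun q _ => hFi p q).symm
    have h2 : (∑ p : Fin n × Fin 3, ∫ t in (0:ℝ)..τ, ∑ q : Fin n × Fin 3, F p q t)
        = ∫ t in (0:ℝ)..τ, ∑ p : Fin n × Fin 3, ∑ q : Fin n × Fin 3, F p q t :=
      (intervalIntegral.integral_finset_sum fun p _ =>
        (continuous_finset_sum _ fun q _ => hFc p q).intervalIntegrable 0 τ).symm
    calc (∑ p : Fin n × Fin 3, ∑ q : Fin n × Fin 3, ∫ t in (0:ℝ)..τ, F p q t)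
        = ∑ p : Fin n × Fin 3, ∫ t in (0:ℝ)..τ, ∑ q : Fin n × Fin 3, F p q t := by
          exact Finset.sum_congr rfl fun p _ => h1 p
      _ = ∫ t in (0:ℝ)..τ, ∑ p : Fin n × Fin 3, ∑ q : Fin n × Fin 3, F p q t := h2
      _ = ∫ t in (0:ℝ)..τ, h t := by
          apply intervalIntegral.integral_congr
          intro t _
          rw [hh]
          simp only [hF]
          rw [Fintype.sum_prod_type]
          simp_rw [Fintype.sum_prod_type]
          have hc : ∀ (i j : Fin n) (a : Fin 3),
              (∑ c : Fin 3, x (i, a) * ((if a = c then g t i * g t j else 0) * x (j, c)))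
                = x (i, a) * (g t i * g t j * x (j, a)) := by
            intro i j a
            rw [Finset.sum_eq_single a]
            · rw [if_pos rfl]
            · intro c _ hca
              rw [if_neg (Ne.symm hca), zero_mul, mul_zero]
            · simp
          simp_rw [hc, heval]
          rw [Finset.sum_comm]
          simp_rw [pow_two, Finset.sum_mul_sum]
          apply Finset.sum_congr rfl; intro a _
          apply Finset.sum_congr rfl; intro i _
          apply Finset.sum_congr rfl; intro j _
          ring
  -- the integral of the nonnegative continuous h vanishes
  have hzero : (∫ t in (0:ℝ)..τ, h t) = 0 := by
    rw [← hquad, hx, dotProduct_zero]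
  have hhc : Continuous h := by
    rw [hh]
    exact continuous_finset_sum _ fun b _ => ((P b).continuous_aeval).pow 2
  have hnonneg : (0 : ℝ → ℝ) ≤ᵐ[volume.restrict (Set.Ioc 0 τ ∪ Set.Ioc τ 0)] h :=
    Filter.Eventually.of_forall fun t => by
      rw [hh]; exact Finset.sum_nonneg fun b _ => sq_nonneg _
  have hae := (intervalIntegral.integral_eq_zero_iff_of_nonneg_ae hnonneg
    (hhc.intervalIntegrable 0 τ)).mp hzero
  have hIoc : Set.Ioc τ (0:ℝ) = ∅ := Set.Ioc_eq_empty (by linarith)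
  rw [hIoc, Set.union_empty] at hae
  have hPzero : ∀ b, P b = 0 := by
    intro b
    by_contra hb
    have hroots : {t : ℝ | (P b).IsRoot t}.Finite := Polynomial.finite_setOf_isRoot hb
    have hsub : Set.Ioc (0:ℝ) τ ⊆
        ({t | h t ≠ 0} ∩ Set.Ioc 0 τ) ∪ {t : ℝ | (P b).IsRoot t} := by
      intro t ht
      by_cases hzt : h t = 0
      · right
        have hsq : ((P b).eval t) ^ 2 = 0 := by
          have := (Finset.sum_eq_zero_iff_of_nonneg
            (fun c _ => sq_nonneg ((P c).eval t))).mp (by rw [hh] at hzt; exact hzt)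
          exact this b (Finset.mem_univ b)
        exact pow_eq_zero_iff (two_ne_zero) |>.mp hsq
      · left; exact ⟨hzt, ht⟩
    have h1 : volume ({t | h t ≠ 0} ∩ Set.Ioc 0 τ) = 0 := by
      have h2 : volume.restrict (Set.Ioc (0:ℝ) τ) {t | ¬ h t = 0} = 0 := by
        exact MeasureTheory.ae_iff.mp hae
      have hms : MeasurableSet {t : ℝ | ¬ h t = 0} := by
        have hm := (measurableSet_eq_fun hhc.measurable
          (measurable_const : Measurable fun _ : ℝ => (0:ℝ))).compl
        simpa [Set.compl_setOf] using hm
      rw [MeasureTheory.Measure.restrict_apply hms] at h2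
      exact h2
    have h2 : volume {t : ℝ | (P b).IsRoot t} = 0 := hroots.measure_zero _
    have h3 : volume (Set.Ioc (0:ℝ) τ) = 0 :=
      measure_mono_null hsub (measure_union_null h1 h2)
    rw [Real.volume_Ioc] at h3
    have : τ - 0 ≤ 0 := by
      by_contra hcon
      exact (ENNReal.ofReal_pos.mpr (by linarith)).ne' h3
    linarith
  funext p
  obtain ⟨i, b⟩ := p
  have hcoeff : (P b).coeff (n - 1 - i.val)
      = x (i, b) / (Nat.factorial (n - 1 - i.val) : ℝ) := by
    rw [hP]
    rw [Polynomial.finset_sum_coeff]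
    rw [Finset.sum_eq_single i]
    · rw [Polynomial.coeff_C_mul, Polynomial.coeff_X_pow, if_pos rfl, mul_one]
    · intro j _ hj
      rw [Polynomial.coeff_C_mul, Polynomial.coeff_X_pow, if_neg, mul_zero]
      have hi := i.isLt
      have hj2 := j.isLt
      have : j.val ≠ i.val := Fin.val_ne_of_ne hj
      omega
    · simp
  rw [hPzero b, Polynomial.coeff_zero] at hcoeff
  have hf : (Nat.factorial (n - 1 - i.val) : ℝ) ≠ 0 :=
    Nat.cast_ne_zero.mpr (Nat.factorial_ne_zero _)
  have : x (i, b) = 0 := by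
    field_simp at hcoeff
    linarith
  simpa using this

lemma gramian_isUnit (n : ℕ) (hn : 1 ≤ n) (τ : ℝ) (hτ : 0 < τ) :
    IsUnit (gramian n τ) := by
  rw [← Matrix.mulVec_injective_iff_isUnit]
  intro u v huv
  have hsub : gramian n τ *ᵥ (u - v) = 0 := by
    rw [Matrix.mulVec_sub, huv, sub_self]
  have := gramian_mulVec_eq_zero n hn τ hτ _ hsub
  exact sub_eq_zero.mp this

/-- Key identity of Proposition 2: `Bᵀ e^{Aᵀ(τ−t)} W_τ⁻¹ G(τ) = I₃` for all
`t ∈ [0,τ]`; equivalently, the minimum-energy control realizing the displacement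
`δ_τ = G(τ)u₀` is the constant `u₀`, for every `u₀ ∈ ℝ³`. -/
theorem constant_primitive_is_min_energy (n : ℕ) (hn : 1 ≤ n) (τ : ℝ)
    (hτ : 0 < τ) :
    ∀ t ∈ Set.Icc (0 : ℝ) τ,
      ((chainB n)ᵀ * (NormedSpace.exp ((τ - t) • chainA n))ᵀ
          * (gramian n τ)⁻¹ * chainG n τ)
        = (1 : Matrix (Fin 3) (Fin 3) ℝ) ∧
      ∀ u₀ : Fin 3 → ℝ,
        ((chainB n)ᵀ * (NormedSpace.exp ((τ - t) • chainA n))ᵀ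
            * (gramian n τ)⁻¹).mulVec ((chainG n τ).mulVec u₀) = u₀ := by
  intro t ht
  have hW := gramian_isUnit n hn τ hτ
  have hWd : IsUnit (gramian n τ).det := (Matrix.isUnit_iff_isUnit_det _).mp hW
  have hG : chainG n τ = gramian n τ * chainB n := (gramian_mul_B n hn τ).symm
  have hmain : (chainB n)ᵀ * (NormedSpace.exp ((τ - t) • chainA n))ᵀ
      * (gramian n τ)⁻¹ * chainG n τ = 1 := by
    rw [hG, Matrix.mul_assoc ((chainB n)ᵀ * (NormedSpace.exp ((τ - t) • chainA n))ᵀ),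
      ← Matrix.mul_assoc (gramian n τ)⁻¹, Matrix.nonsing_inv_mul _ hWd, Matrix.one_mul]
    exact BT_exp_B n hn _
  refine ⟨hmain, fun u₀ => ?_⟩
  rw [Matrix.mulVec_mulVec, hmain, Matrix.one_mulVec]
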